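/- arXiv:1806.06127 — 2 statements merged into one kernel-verified Lean document; each statement's English description precedes it below -/
import Mathlib

section
/- The minimal average acceleration cost for a C^2 curve ξ:[0,h]→ℝ^d with (ξ,ξ')(0)=(x,v) and (ξ,ξ')(h)=(x',v') satisfies: the infimum of ∫₀ʰ |ξ''(t)|² dt over all such curves equals C_h(x,v;x',v')/h where C_h(x,v;x',v') := |v'-v|² + 12|((x'-x)/h) - (v'+v)/2|², and is attained by a cubic polynomial. -/
/-!
Integrating by parts, the moments `∫₀ʰ ξ''` and `∫₀ʰ t ξ''` of the acceleration of an admissible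
curve equal `v' - v` and `h v' - x' + x`, so they depend only on the boundary data. The cubic
`ξ₀ = optimalCurve h x v x' v'` is admissible and its acceleration is affine in `t`. An affine
function is `L²`-orthogonal to every function whose zeroth and first moments vanish, hence
`∫|ξ''|² = ∫|ξ₀''|² + ∫|ξ'' - ξ₀''|² ≥ ∫|ξ₀''|²`, and a direct computation gives
`∫|ξ₀''|² = C_h(x,v;x',v')/h`.
-/

noncomputable section

abbrev E (d : ℕ) := EuclideanSpace ℝ (Fin d)

/-- The minimal acceleration cost function
`C_h(x,v;x',v') = |v'-v|² + 12|((x'-x)/h) - (v'+v)/2|²`. -/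
noncomputable def Ch (d : ℕ) (h : ℝ) (x v x' v' : E d) : ℝ :=
  ‖v' - v‖ ^ 2 + 12 * ‖h⁻¹ • (x' - x) - (1 / 2 : ℝ) • (v' + v)‖ ^ 2

/-- The admissible curves: `ξ ∈ C²([0,h],ℝ^d)` with `(ξ,ξ')(0) = (x,v)` and
`(ξ,ξ')(h) = (x',v')`. -/
def Admissible (d : ℕ) (h : ℝ) (x v x' v' : E d) (ξ : ℝ → E d) : Prop :=
  ContDiff ℝ 2 ξ ∧ ξ 0 = x ∧ deriv ξ 0 = v ∧ ξ h = x' ∧ deriv ξ h = v'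

open RealInnerProductSpace

namespace MinAcceleration

section Cubic

variable {F : Type*} [NormedAddCommGroup F] [NormedSpace ℝ F]

def cubic (a b c₂ c₃ : F) (t : ℝ) : F := a + t • b + t ^ 2 • c₂ + t ^ 3 • c₃

theorem contDiff_cubic (a b c₂ c₃ : F) : ContDiff ℝ 2 (cubic a b c₂ c₃) := by
  unfold cubic
  fun_prop

theorem hasDerivAt_cubic (a b c₂ c₃ : F) (t : ℝ) :
    HasDerivAt (cubic a b c₂ c₃) (b + (2 * t) • c₂ + (3 * t ^ 2) • c₃) t := by
  have H := ((((hasDerivAt_const t a).add ((hasDerivAt_id t).smul_const b)).add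
    ((hasDerivAt_pow 2 t).smul_const c₂)).add ((hasDerivAt_pow 3 t).smul_const c₃))
  exact H.congr_deriv (by simp)

theorem deriv_cubic (a b c₂ c₃ : F) :
    deriv (cubic a b c₂ c₃) = fun t => b + (2 * t) • c₂ + (3 * t ^ 2) • c₃ :=
  funext fun t => (hasDerivAt_cubic a b c₂ c₃ t).deriv

theorem iteratedDeriv_two_cubic (a b c₂ c₃ : F) (t : ℝ) :
    iteratedDeriv 2 (cubic a b c₂ c₃) t = (2 : ℝ) • c₂ + (6 * t) • c₃ := by
  rw [iteratedDeriv_succ, iteratedDeriv_one, deriv_cubic]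
  have H := ((hasDerivAt_const t b).add (((hasDerivAt_id t).const_mul 2).smul_const c₂)).add
    (((hasDerivAt_pow 2 t).const_mul 3).smul_const c₃)
  exact (H.congr_deriv (by simp; module)).deriv

end Cubic

section Moments

variable {F : Type*} [NormedAddCommGroup F] [NormedSpace ℝ F] {ξ : ℝ → F}

theorem hasDerivAt_deriv_of_contDiff_two (hξ : ContDiff ℝ 2 ξ) (t : ℝ) :
    HasDerivAt (deriv ξ) (iteratedDeriv 2 ξ t) t := by
  have hd : Differentiable ℝ (deriv ξ) := by
    simpa only [iteratedDeriv_one] using hξ.differentiable_iteratedDeriv 1 (by norm_num)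
  rw [iteratedDeriv_succ, iteratedDeriv_one]
  exact (hd t).hasDerivAt

theorem integral_iteratedDeriv_two [CompleteSpace F] (hξ : ContDiff ℝ 2 ξ) (a b : ℝ) :
    ∫ t in a..b, iteratedDeriv 2 ξ t = deriv ξ b - deriv ξ a :=
  intervalIntegral.integral_eq_sub_of_hasDerivAt
    (fun t _ => hasDerivAt_deriv_of_contDiff_two hξ t)
    ((hξ.continuous_iteratedDeriv 2 le_rfl).intervalIntegrable a b)

theorem integral_smul_iteratedDeriv_two [CompleteSpace F] (hξ : ContDiff ℝ 2 ξ) (a b : ℝ) :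
    ∫ t in a..b, t • iteratedDeriv 2 ξ t
      = (b • deriv ξ b - ξ b) - (a • deriv ξ a - ξ a) := by
  have hderiv (t : ℝ) : HasDerivAt (fun s => s • deriv ξ s - ξ s)
      (t • iteratedDeriv 2 ξ t) t := by
    have H := ((hasDerivAt_id t).smul (hasDerivAt_deriv_of_contDiff_two hξ t)).sub
      ((hξ.differentiable (by norm_num) t).hasDerivAt)
    exact H.congr_deriv (by simp)
  exact intervalIntegral.integral_eq_sub_of_hasDerivAt (fun t _ => hderiv t)
    ((continuous_id.smul (hξ.continuous_iteratedDeriv 2 le_rfl)).intervalIntegrable a b)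

end Moments

section Orthogonality

variable {F : Type*} [NormedAddCommGroup F] [InnerProductSpace ℝ F] {a b : ℝ}

theorem integral_inner_affine_eq_zero [CompleteSpace F] {r : ℝ → F} (hr : Continuous r)
    (p q : F)
    (h₀ : ∫ t in a..b, r t = 0) (h₁ : ∫ t in a..b, t • r t = 0) :
    ∫ t in a..b, ⟪p + t • q, r t⟫ = 0 := by
  have hr₁ : Continuous fun t => t • r t := continuous_id.smul hr
  have hp : ∫ t in a..b, ⟪p, r t⟫ = ⟪p, ∫ t in a..b, r t⟫ :=
    (innerSL ℝ p).intervalIntegral_comp_comm (hr.intervalIntegrable a b)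
  have hq : ∫ t in a..b, ⟪q, t • r t⟫ = ⟪q, ∫ t in a..b, t • r t⟫ :=
    (innerSL ℝ q).intervalIntegral_comp_comm (hr₁.intervalIntegrable a b)
  calc ∫ t in a..b, ⟪p + t • q, r t⟫
      = ∫ t in a..b, (⟪p, r t⟫ + ⟪q, t • r t⟫) := by
        congr 1 with t
        rw [inner_add_left, real_inner_smul_left, real_inner_smul_right]
    _ = ⟪p, ∫ t in a..b, r t⟫ + ⟪q, ∫ t in a..b, t • r t⟫ := by
        rw [intervalIntegral.integral_add ((continuous_const.inner hr).intervalIntegrable a b)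
            ((continuous_const.inner hr₁).intervalIntegrable a b), hp, hq]
    _ = 0 := by rw [h₀, h₁, inner_zero_right, inner_zero_right, add_zero]

theorem integral_norm_sq_affine_le [CompleteSpace F] {f : ℝ → F} (hf : Continuous f) (p q : F)
    (hab : a ≤ b)
    (h₀ : ∫ t in a..b, f t = ∫ t in a..b, p + t • q)
    (h₁ : ∫ t in a..b, t • f t = ∫ t in a..b, t • (p + t • q)) :
    ∫ t in a..b, ‖p + t • q‖ ^ 2 ≤ ∫ t in a..b, ‖f t‖ ^ 2 := by
  have hg : Continuous fun t : ℝ => p + t • q := by fun_prop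
  have hcross : ∫ t in a..b, ⟪p + t • q, f t - (p + t • q)⟫ = 0 := by
    refine integral_inner_affine_eq_zero (r := fun t => f t - (p + t • q)) (by fun_prop) p q ?_ ?_
    · rw [intervalIntegral.integral_sub (hf.intervalIntegrable a b) (hg.intervalIntegrable a b),
        h₀, sub_self]
    · simp_rw [smul_sub]
      rw [intervalIntegral.integral_sub (Continuous.intervalIntegrable (by fun_prop) a b)
        (Continuous.intervalIntegrable (by fun_prop) a b), h₁, sub_self]
  calc ∫ t in a..b, ‖p + t • q‖ ^ 2
      = ∫ t in a..b, (‖p + t • q‖ ^ 2 + 2 * ⟪p + t • q, f t - (p + t • q)⟫) := by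
        rw [intervalIntegral.integral_add (Continuous.intervalIntegrable (by fun_prop) a b)
          (Continuous.intervalIntegrable (by fun_prop) a b),
          intervalIntegral.integral_const_mul, hcross, mul_zero, add_zero]
    _ ≤ ∫ t in a..b, ‖f t‖ ^ 2 := by
        refine intervalIntegral.integral_mono_on hab
          (Continuous.intervalIntegrable (by fun_prop) a b)
          (Continuous.intervalIntegrable (by fun_prop) a b) fun t _ => ?_
        have hexpand := norm_add_sq_real (p + t • q) (f t - (p + t • q))
        rw [add_sub_cancel] at hexpand
        nlinarith [sq_nonneg ‖f t - (p + t • q)‖]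

theorem integral_norm_sq_affine (p q : F) (h : ℝ) :
    ∫ t in (0 : ℝ)..h, ‖p + t • q‖ ^ 2
      = h * ‖p‖ ^ 2 + h ^ 2 * ⟪p, q⟫ + h ^ 3 / 3 * ‖q‖ ^ 2 := by
  have hexpand (t : ℝ) : ‖p + t • q‖ ^ 2 = ‖p‖ ^ 2 + t * (2 * ⟪p, q⟫) + t ^ 2 * ‖q‖ ^ 2 := by
    rw [norm_add_sq_real, real_inner_smul_right, norm_smul, mul_pow, Real.norm_eq_abs, sq_abs]
    ring
  simp_rw [hexpand]
  rw [intervalIntegral.integral_add (Continuous.intervalIntegrable (by fun_prop) 0 h)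
      (Continuous.intervalIntegrable (by fun_prop) 0 h),
    intervalIntegral.integral_add (Continuous.intervalIntegrable (by fun_prop) 0 h)
      (Continuous.intervalIntegrable (by fun_prop) 0 h)]
  simp only [intervalIntegral.integral_const, intervalIntegral.integral_mul_const, integral_id,
    integral_pow, smul_eq_mul]
  ring

end Orthogonality

section OptimalCurve

variable {F : Type*} [NormedAddCommGroup F] [InnerProductSpace ℝ F]

def velocityDefect (h : ℝ) (x v x' v' : F) : F := h⁻¹ • (x' - x) - (1 / 2 : ℝ) • (v' + v)

def optimalCurve (h : ℝ) (x v x' v' : F) : ℝ → F :=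
  cubic x v ((2 * h)⁻¹ • (v' - v + (6 : ℝ) • velocityDefect h x v x' v'))
    (-(2 / h ^ 2) • velocityDefect h x v x' v')

theorem iteratedDeriv_two_optimalCurve (h : ℝ) (x v x' v' : F) :
    iteratedDeriv 2 (optimalCurve h x v x' v') = fun t =>
      h⁻¹ • (v' - v + (6 : ℝ) • velocityDefect h x v x' v')
        + t • (-(12 / h ^ 2) • velocityDefect h x v x' v') := by
  ext1 t
  rw [optimalCurve, iteratedDeriv_two_cubic]
  match_scalars <;> ring

theorem optimalCurve_boundary {h : ℝ} (hh : h ≠ 0) (x v x' v' : F) :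
    optimalCurve h x v x' v' 0 = x ∧ deriv (optimalCurve h x v x' v') 0 = v ∧
      optimalCurve h x v x' v' h = x' ∧ deriv (optimalCurve h x v x' v') h = v' := by
  simp only [optimalCurve, cubic, deriv_cubic, velocityDefect]
  refine ⟨by simp, by simp, ?_, ?_⟩ <;> match_scalars <;> field_simp <;> ring

theorem integral_norm_sq_iteratedDeriv_two_optimalCurve {h : ℝ} (hh : h ≠ 0) (x v x' v' : F) :
    ∫ t in (0 : ℝ)..h, ‖iteratedDeriv 2 (optimalCurve h x v x' v') t‖ ^ 2
      = (‖v' - v‖ ^ 2 + 12 * ‖velocityDefect h x v x' v'‖ ^ 2) / h := by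
  rw [iteratedDeriv_two_optimalCurve, integral_norm_sq_affine]
  generalize velocityDefect h x v x' v' = w
  simp only [← real_inner_self_eq_norm_sq, inner_add_left, inner_add_right, real_inner_smul_left,
    real_inner_smul_right, real_inner_comm (v' - v) w]
  field_simp
  ring

end OptimalCurve

section Admissible

variable {d : ℕ} {h : ℝ} {x v x' v' : E d} {ξ : ℝ → E d}

theorem admissible_optimalCurve (hh : h ≠ 0) :
    Admissible d h x v x' v' (optimalCurve h x v x' v') :=
  ⟨contDiff_cubic _ _ _ _, optimalCurve_boundary hh x v x' v'⟩

theorem _root_.Admissible.integral_iteratedDeriv_two (hξ : Admissible d h x v x' v' ξ) :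
    ∫ t in (0 : ℝ)..h, iteratedDeriv 2 ξ t = v' - v := by
  obtain ⟨hC, -, hv, -, hv'⟩ := hξ
  rw [MinAcceleration.integral_iteratedDeriv_two hC, hv, hv']

theorem _root_.Admissible.integral_smul_iteratedDeriv_two (hξ : Admissible d h x v x' v' ξ) :
    ∫ t in (0 : ℝ)..h, t • iteratedDeriv 2 ξ t = h • v' - x' + x := by
  obtain ⟨hC, hx, hv, hx', hv'⟩ := hξ
  rw [MinAcceleration.integral_smul_iteratedDeriv_two hC, hx, hv, hx', hv', zero_smul]
  abel

theorem Ch_div_le_of_admissible (hh : 0 < h) (hξ : Admissible d h x v x' v' ξ) :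
    Ch d h x v x' v' / h ≤ ∫ t in (0 : ℝ)..h, ‖iteratedDeriv 2 ξ t‖ ^ 2 := by
  have hopt := admissible_optimalCurve (x := x) (v := v) (x' := x') (v' := v') hh.ne'
  have hacc := congrFun (iteratedDeriv_two_optimalCurve h x v x' v')
  rw [Ch, ← velocityDefect, ← integral_norm_sq_iteratedDeriv_two_optimalCurve hh.ne']
  simp_rw [hacc]
  refine integral_norm_sq_affine_le (hξ.1.continuous_iteratedDeriv 2 le_rfl) _ _ hh.le ?_ ?_
  · simp_rw [hξ.integral_iteratedDeriv_two, ← hacc, hopt.integral_iteratedDeriv_two]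
  · simp_rw [hξ.integral_smul_iteratedDeriv_two, ← hacc, hopt.integral_smul_iteratedDeriv_two]

end Admissible

end MinAcceleration

open MinAcceleration

/-- The infimum of `∫₀ʰ |ξ''(t)|² dt` over admissible `C²` curves equals
`C_h(x,v;x',v')/h` and is attained by a cubic polynomial. -/
theorem min_acceleration_cost {d : ℕ} (h : ℝ) (hh : 0 < h) (x v x' v' : E d) :
    sInf {c : ℝ | ∃ ξ : ℝ → E d, Admissible d h x v x' v' ξ ∧
        c = ∫ t in (0:ℝ)..h, ‖iteratedDeriv 2 ξ t‖ ^ 2} = Ch d h x v x' v' / h ∧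
    ∃ ξ : ℝ → E d, (∃ a b c₂ c₃ : E d, ∀ t : ℝ,
        ξ t = a + t • b + t ^ 2 • c₂ + t ^ 3 • c₃) ∧
      Admissible d h x v x' v' ξ ∧
      (∫ t in (0:ℝ)..h, ‖iteratedDeriv 2 ξ t‖ ^ 2) = Ch d h x v x' v' / h := by
  have hcost : ∫ t in (0 : ℝ)..h, ‖iteratedDeriv 2 (optimalCurve h x v x' v') t‖ ^ 2
      = Ch d h x v x' v' / h :=
    integral_norm_sq_iteratedDeriv_two_optimalCurve hh.ne' x v x' v'
  have hleast : IsLeast {c : ℝ | ∃ ξ : ℝ → E d, Admissible d h x v x' v' ξ ∧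
      c = ∫ t in (0:ℝ)..h, ‖iteratedDeriv 2 ξ t‖ ^ 2} (Ch d h x v x' v' / h) := by
    refine ⟨⟨optimalCurve h x v x' v', admissible_optimalCurve hh.ne', hcost.symm⟩, ?_⟩
    rintro c ⟨ξ, hξ, rfl⟩
    exact Ch_div_le_of_admissible hh hξ
  exact ⟨hleast.csInf_eq, optimalCurve h x v x' v', ⟨_, _, _, _, fun _ => rfl⟩,
    admissible_optimalCurve hh.ne', hcost⟩
end
end

section
/- The Kantorovich functional W_h associated with the cost C_h satisfies W_h(μ,ν) = W₂((G_h ∘ F_h)_# μ, (G_h)_# ν) for all μ, ν ∈ P₂(ℝ^{2d}), where W₂ denotes the 2-Wasserstein distance. Consequently, the infimum defining W_h(μ,ν) is attained. -/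
open MeasureTheory

noncomputable section

/-- `p` is a coupling of `μ` and `ν`. -/
def IsCoupling {X : Type*} [MeasurableSpace X] (μ ν : Measure X)
    (p : Measure (X × X)) : Prop :=
  p.map Prod.fst = μ ∧ p.map Prod.snd = ν

/-- The squared Kantorovich functional `W_h(μ,ν)²` associated with the cost `C_h`. -/
noncomputable def Whsq (d : ℕ) (h : ℝ) (μ ν : Measure (E d × E d)) : ℝ :=
  sInf {c : ℝ | ∃ p : Measure ((E d × E d) × (E d × E d)), IsCoupling μ ν p ∧
    c = ∫ z, Ch d h z.1.1 z.1.2 z.2.1 z.2.2 ∂p}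

/-- The squared 2-Wasserstein distance on `P₂(ℝ^{2d})`. -/
noncomputable def W2sq (d : ℕ) (μ ν : Measure (E d × E d)) : ℝ :=
  sInf {c : ℝ | ∃ p : Measure ((E d × E d) × (E d × E d)), IsCoupling μ ν p ∧
    c = ∫ z, (‖z.1.1 - z.2.1‖ ^ 2 + ‖z.1.2 - z.2.2‖ ^ 2) ∂p}

/-- The free transport map `F_h(x,v) = (x+hv, v)`. -/
def Fmap (d : ℕ) (h : ℝ) : E d × E d → E d × E d := fun z => (z.1 + h • z.2, z.2)

/-- The map `G_h(x,v) = (√3(2x/h - v), v)`. -/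
noncomputable def Gmap (d : ℕ) (h : ℝ) : E d × E d → E d × E d :=
  fun z => (Real.sqrt 3 • ((2 / h) • z.1 - z.2), z.2)

/-!
The cost `C_h` is a squared Euclidean distance in disguise. With `u = (2/h)(x - x') + v + v'`,
one has `h⁻¹(x' - x) - (v' + v)/2 = -u/2`, while the first components of `G_h (F_h (x,v))` and
`G_h (x',v')` differ by `√3 u`; hence `C_h(x,v;x',v') = |G_h (F_h (x,v)) - G_h (x',v')|²`.
As `G_h ∘ F_h` and `G_h` are measurable bijections, pushing couplings forward by them identifies
the two transport problems.

An optimal coupling exists by the direct method: the couplings of two fixed probability measures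
on a Polish space form a tight, weakly closed, hence (Prokhorov) compact set of probability
measures, and `p ↦ ∫⁻ c dp` is lower semicontinuous for continuous `c ≥ 0`, being the supremum of
the weakly continuous maps `p ↦ ∫⁻ min c n dp`.
-/

open scoped ENNReal NNReal

section Couplings

variable {X Y : Type*} [MeasurableSpace X] [MeasurableSpace Y]

def couplingCosts (μ ν : Measure X) (c : X × X → ℝ) : Set ℝ :=
  {x | ∃ p : Measure (X × X), IsCoupling μ ν p ∧ x = ∫ z, c z ∂p}

lemma isCoupling_prod (μ ν : Measure X) [IsProbabilityMeasure μ] [IsProbabilityMeasure ν] :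
    IsCoupling μ ν (μ.prod ν) := by
  constructor <;> simp

lemma IsCoupling.isProbabilityMeasure {μ ν : Measure X} [IsProbabilityMeasure μ]
    {p : Measure (X × X)} (hp : IsCoupling μ ν p) : IsProbabilityMeasure p := by
  refine ⟨?_⟩
  rw [← Set.preimage_univ (f := Prod.fst), ← Measure.map_apply measurable_fst .univ, hp.1,
    measure_univ]

lemma IsCoupling.map_prodMap {μ ν : Measure X} {p : Measure (X × X)} (hp : IsCoupling μ ν p)
    {f g : X → Y} (hf : Measurable f) (hg : Measurable g) :
    IsCoupling (μ.map f) (ν.map g) (p.map (Prod.map f g)) := by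
  constructor
  · rw [← hp.1, Measure.map_map measurable_fst (hf.prodMap hg),
      Measure.map_map hf measurable_fst]
    rfl
  · rw [← hp.2, Measure.map_map measurable_snd (hf.prodMap hg),
      Measure.map_map hg measurable_snd]
    rfl

lemma couplingCosts_map (e₁ e₂ : X ≃ᵐ Y) (μ ν : Measure X) (c : Y × Y → ℝ) :
    couplingCosts (μ.map e₁) (ν.map e₂) c = couplingCosts μ ν (c ∘ Prod.map e₁ e₂) := by
  set e := e₁.prodCongr e₂
  ext x
  constructor
  · rintro ⟨q, hq, rfl⟩
    refine ⟨q.map e.symm, ?_, ?_⟩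
    · have := hq.map_prodMap e₁.symm.measurable e₂.symm.measurable
      rwa [MeasurableEquiv.map_symm_map, MeasurableEquiv.map_symm_map] at this
    · rw [integral_map_equiv]
      exact integral_congr_ae (.of_forall fun z => congrArg c (e.apply_symm_apply z).symm)
  · rintro ⟨p, hp, rfl⟩
    exact ⟨p.map e, hp.map_prodMap e₁.measurable e₂.measurable, (integral_map_equiv e c).symm⟩

end Couplings

section Existence

open BoundedContinuousFunction

lemma lowerSemicontinuous_lintegral {X : Type*} [TopologicalSpace X] [MeasurableSpace X]
    [OpensMeasurableSpace X] {c : X → ℝ≥0} (hc : Continuous c) :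
    LowerSemicontinuous fun μ : ProbabilityMeasure X => ∫⁻ x, c x ∂μ := by
  let cₙ (n : ℕ) : X →ᵇ ℝ≥0 := .mkOfBound ⟨fun x => min (c x) n, by fun_prop⟩ n fun x y => by
    have hIcc (x : X) : (min (c x) n : ℝ) ∈ Set.Icc 0 (n : ℝ) :=
      ⟨by positivity, by exact_mod_cast min_le_right _ _⟩
    simpa [NNReal.dist_eq, Real.dist_eq] using Real.dist_le_of_mem_Icc (hIcc x) (hIcc y)
  have hc_iSup (x : X) : (c x : ℝ≥0∞) = ⨆ n, (cₙ n x : ℝ≥0∞) := by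
    refine le_antisymm ?_ (iSup_le fun n => by simp [cₙ])
    refine le_iSup_of_le ⌈c x⌉₊ ?_
    simp [cₙ, Nat.le_ceil]
  have hmono : Monotone fun n x => (cₙ n x : ℝ≥0∞) := fun m n hmn x => by
    simp only [cₙ, mkOfBound_coe, ContinuousMap.coe_mk]
    gcongr
  have hlint : (fun μ : ProbabilityMeasure X => ∫⁻ x, c x ∂μ) =
      fun μ : ProbabilityMeasure X => ⨆ n, ∫⁻ x, cₙ n x ∂μ := by
    funext μ
    simp_rw [hc_iSup]
    exact lintegral_iSup (fun n => (cₙ n).continuous.measurable.coe_nnreal_ennreal) hmono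
  rw [hlint]
  exact lowerSemicontinuous_iSup fun n =>
    (ProbabilityMeasure.continuous_lintegral_boundedContinuousFunction (cₙ n)).lowerSemicontinuous

variable {X : Type*} [TopologicalSpace X] [PolishSpace X] [MeasurableSpace X] [BorelSpace X]

lemma isCompact_setOf_isCoupling (μ ν : Measure X) [IsProbabilityMeasure μ]
    [IsProbabilityMeasure ν] :
    IsCompact {p : ProbabilityMeasure (X × X) | IsCoupling μ ν p} := by
  let S := {p : ProbabilityMeasure (X × X) | IsCoupling μ ν p}
  let μ₀ : ProbabilityMeasure X := ⟨μ, inferInstance⟩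
  let ν₀ : ProbabilityMeasure X := ⟨ν, inferInstance⟩
  have hS : S = (fun p => p.map measurable_fst.aemeasurable) ⁻¹' {μ₀} ∩
      (fun p => p.map measurable_snd.aemeasurable) ⁻¹' {ν₀} := by
    ext p
    simp only [Set.mem_inter_iff, Set.mem_preimage, Set.mem_singleton_iff,
      ← ProbabilityMeasure.toMeasure_injective.eq_iff, ProbabilityMeasure.toMeasure_map]
    rfl
  have hclosed : IsClosed S := by
    rw [hS]
    exact (isClosed_singleton.preimage (ProbabilityMeasure.continuous_map continuous_fst)).inter
      (isClosed_singleton.preimage (ProbabilityMeasure.continuous_map continuous_snd))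
  have htight : IsTightMeasureSet {(p : Measure (X × X)) | p ∈ S} := by
    refine .prodMk ((isTightMeasureSet_singleton (μ := μ)).subset ?_)
      ((isTightMeasureSet_singleton (μ := ν)).subset ?_)
    · rintro _ ⟨_, ⟨p, hp, rfl⟩, rfl⟩
      exact hp.1
    · rintro _ ⟨_, ⟨p, hp, rfl⟩, rfl⟩
      exact hp.2
  simpa only [hclosed.closure_eq] using isCompact_closure_of_isTightMeasureSet htight

theorem exists_isCoupling_integral_eq_sInf (μ ν : Measure X) [IsProbabilityMeasure μ]
    [IsProbabilityMeasure ν] {c : X × X → ℝ} (hc : Continuous c) (hc₀ : 0 ≤ c)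
    (hint : ∀ p, IsCoupling μ ν p → Integrable c p) :
    ∃ p, IsCoupling μ ν p ∧ ∫ z, c z ∂p = sInf (couplingCosts μ ν c) := by
  have hlsc := lowerSemicontinuous_lintegral (X := X × X) (c := fun z => (c z).toNNReal)
    (by fun_prop)
  obtain ⟨p₀, hp₀, hmin⟩ := LowerSemicontinuousOn.exists_isMinOn
    ⟨⟨μ.prod ν, inferInstance⟩, isCoupling_prod μ ν⟩ (isCompact_setOf_isCoupling μ ν)
    (hlsc.lowerSemicontinuousOn _)
  refine ⟨p₀, hp₀, (IsLeast.csInf_eq (s := couplingCosts μ ν c) ⟨⟨p₀, hp₀, rfl⟩, ?_⟩).symm⟩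
  rintro _ ⟨p, hp, rfl⟩
  have := hp.isProbabilityMeasure
  have hle : ∫⁻ z, ENNReal.ofReal (c z) ∂p₀ ≤ ∫⁻ z, ENNReal.ofReal (c z) ∂p :=
    hmin (a := ⟨p, this⟩) hp
  rw [integral_eq_lintegral_of_nonneg_ae (.of_forall hc₀) hc.aestronglyMeasurable,
    integral_eq_lintegral_of_nonneg_ae (.of_forall hc₀) hc.aestronglyMeasurable]
  exact ENNReal.toReal_mono (hint p hp).lintegral_lt_top.ne hle

end Existence

section SecondMoments

variable {F : Type*} [NormedAddCommGroup F] [MeasurableSpace F] [BorelSpace F]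
  [SecondCountableTopology F] {μ : Measure (F × F)}

lemma memLp_fst_of_integrable_sq_norm
    (hμ : Integrable (fun z : F × F => ‖z.1‖ ^ 2 + ‖z.2‖ ^ 2) μ) :
    MemLp Prod.fst 2 μ :=
  (memLp_two_iff_integrable_sq_norm continuous_fst.aestronglyMeasurable).2 <|
    hμ.mono' (by fun_prop) (.of_forall fun z => by simp)

lemma memLp_snd_of_integrable_sq_norm
    (hμ : Integrable (fun z : F × F => ‖z.1‖ ^ 2 + ‖z.2‖ ^ 2) μ) :
    MemLp Prod.snd 2 μ :=
  (memLp_two_iff_integrable_sq_norm continuous_snd.aestronglyMeasurable).2 <|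
    hμ.mono' (by fun_prop) (.of_forall fun z => by simp)

end SecondMoments

section Kinetic

def Fmap.homeomorph (d : ℕ) (h : ℝ) : E d × E d ≃ₜ E d × E d where
  toFun := Fmap d h
  invFun z := (z.1 - h • z.2, z.2)
  left_inv z := by simp [Fmap]
  right_inv z := by simp [Fmap]
  continuous_toFun := by unfold Fmap; fun_prop
  continuous_invFun := by fun_prop

def Gmap.homeomorph (d : ℕ) {h : ℝ} (hh : h ≠ 0) : E d × E d ≃ₜ E d × E d where
  toFun := Gmap d h
  invFun w := ((h / 2) • ((√3)⁻¹ • w.1 + w.2), w.2)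
  left_inv := fun ⟨x, v⟩ => by
    simp only [Gmap, Prod.mk.injEq, and_true]
    rw [inv_smul_smul₀ (by positivity), sub_add_cancel, smul_smul,
      show h / 2 * (2 / h) = 1 by field_simp, one_smul]
  right_inv := fun ⟨x, v⟩ => by
    simp only [Gmap, Prod.mk.injEq, and_true]
    rw [smul_smul, show 2 / h * (h / 2) = 1 by field_simp, one_smul, add_sub_cancel_right,
      smul_inv_smul₀ (by positivity)]
  continuous_toFun := by unfold Gmap; fun_prop
  continuous_invFun := by fun_prop

variable {d : ℕ}

lemma Ch_eq_Gmap_Fmap {h : ℝ} (hh : h ≠ 0) (x v x' v' : E d) :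
    Ch d h x v x' v' = ‖(Gmap d h (Fmap d h (x, v))).1 - (Gmap d h (x', v')).1‖ ^ 2 +
      ‖(Gmap d h (Fmap d h (x, v))).2 - (Gmap d h (x', v')).2‖ ^ 2 := by
  set u : E d := (2 / h) • (x - x') + v + v'
  have hG : (Gmap d h (Fmap d h (x, v))).1 - (Gmap d h (x', v')).1 = √3 • u := by
    simp only [Gmap, Fmap, u]
    match_scalars <;> (field_simp; try ring)
  have hCh : h⁻¹ • (x' - x) - (1 / 2 : ℝ) • (v' + v) = (-(1 / 2) : ℝ) • u := by
    simp only [u]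
    match_scalars <;> (field_simp; try ring)
  have hv : (Gmap d h (Fmap d h (x, v))).2 - (Gmap d h (x', v')).2 = v - v' := rfl
  rw [Ch, hG, hv, hCh, norm_smul, norm_smul, norm_sub_rev,
    Real.norm_of_nonneg (Real.sqrt_nonneg 3), mul_pow, mul_pow, Real.sq_sqrt zero_le_three]
  norm_num
  ring

lemma Whsq_eq_W2sq_map {h : ℝ} (hh : h ≠ 0) (μ ν : Measure (E d × E d)) :
    Whsq d h μ ν = W2sq d (μ.map (Gmap d h ∘ Fmap d h)) (ν.map (Gmap d h)) := by
  let e₁ := ((Fmap.homeomorph d h).trans (Gmap.homeomorph d hh)).toMeasurableEquiv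
  let e₂ := (Gmap.homeomorph d hh).toMeasurableEquiv
  have he₁ : ⇑e₁ = Gmap d h ∘ Fmap d h := rfl
  have he₂ : ⇑e₂ = Gmap d h := rfl
  have hcost := couplingCosts_map e₁ e₂ μ ν fun z => ‖z.1.1 - z.2.1‖ ^ 2 + ‖z.1.2 - z.2.2‖ ^ 2
  rw [he₁, he₂] at hcost
  rw [W2sq, ← couplingCosts, hcost, Whsq, ← couplingCosts]
  congr with z
  exact Ch_eq_Gmap_Fmap hh ..

lemma IsCoupling.integrable_Ch (h : ℝ) {μ ν : Measure (E d × E d)}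
    {p : Measure ((E d × E d) × (E d × E d))} (hp : IsCoupling μ ν p)
    (hμ : Integrable (fun z : E d × E d => ‖z.1‖ ^ 2 + ‖z.2‖ ^ 2) μ)
    (hν : Integrable (fun z : E d × E d => ‖z.1‖ ^ 2 + ‖z.2‖ ^ 2) ν) :
    Integrable (fun z => Ch d h z.1.1 z.1.2 z.2.1 z.2.2) p := by
  have hx : MemLp (fun z => z.1.1) 2 p :=
    (hp.1 ▸ memLp_fst_of_integrable_sq_norm hμ).comp_of_map measurable_fst.aemeasurable
  have hv : MemLp (fun z => z.1.2) 2 p :=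
    (hp.1 ▸ memLp_snd_of_integrable_sq_norm hμ).comp_of_map measurable_fst.aemeasurable
  have hx' : MemLp (fun z => z.2.1) 2 p :=
    (hp.2 ▸ memLp_fst_of_integrable_sq_norm hν).comp_of_map measurable_snd.aemeasurable
  have hv' : MemLp (fun z => z.2.2) 2 p :=
    (hp.2 ▸ memLp_snd_of_integrable_sq_norm hν).comp_of_map measurable_snd.aemeasurable
  have hw := ((hx'.sub hx).const_smul h⁻¹).sub ((hv'.add hv).const_smul (1 / 2 : ℝ))
  exact ((hv'.sub hv).integrable_norm_pow two_ne_zero).add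
    ((hw.integrable_norm_pow two_ne_zero).const_mul 12)

end Kinetic

/-- `W_h(μ,ν) = W₂((G_h∘F_h)_# μ, (G_h)_# ν)` for all `μ,ν ∈ P₂(ℝ^{2d})`; as a
consequence the infimum defining `W_h(μ,ν)` is attained. -/
theorem Wh_eq_W2_pushforward {d : ℕ} (h : ℝ) (hh : 0 < h)
    (μ ν : Measure (E d × E d)) [IsProbabilityMeasure μ] [IsProbabilityMeasure ν]
    (hμ : Integrable (fun z : E d × E d => ‖z.1‖ ^ 2 + ‖z.2‖ ^ 2) μ)
    (hν : Integrable (fun z : E d × E d => ‖z.1‖ ^ 2 + ‖z.2‖ ^ 2) ν) :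
    Whsq d h μ ν = W2sq d (μ.map (Gmap d h ∘ Fmap d h)) (ν.map (Gmap d h)) ∧
    ∃ p : Measure ((E d × E d) × (E d × E d)), IsCoupling μ ν p ∧
      (∫ z, Ch d h z.1.1 z.1.2 z.2.1 z.2.2 ∂p) = Whsq d h μ ν :=
  ⟨Whsq_eq_W2sq_map hh.ne' μ ν,
    exists_isCoupling_integral_eq_sInf μ ν (by unfold Ch; fun_prop)
      (fun _ => by unfold Ch; positivity) fun _ hp => hp.integrable_Ch h hμ hν⟩
end
end
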